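/- Let D ⊂ ℝ² be a bounded measurable set of positive area with rotational symmetry of order N ≥ 3, and let T be an invertible 2×2 real matrix. Then (1/2)‖T^{-1}‖²_HS = [I(T D)/A(T D)³] / [I(D)/A(D)³], where A denotes area and I denotes moment of inertia about the centroid. -/

import Mathlib

open MeasureTheory Real Set

noncomputable section

/-- The 2×2 rotation matrix by angle `θ`. -/
def rot (θ : ℝ) : Matrix (Fin 2) (Fin 2) ℝ :=
  !![Real.cos θ, -Real.sin θ; Real.sin θ, Real.cos θ]

/-- Area of a plane region. -/
def area (D : Set (Fin 2 → ℝ)) : ℝ := (volume D).toReal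

/-- Centroid of a plane region. -/
def centroid (D : Set (Fin 2 → ℝ)) (j : Fin 2) : ℝ := (∫ x in D, x j) / area D

/-- Moment of inertia about the centroid. -/
def inertia (D : Set (Fin 2 → ℝ)) : ℝ :=
  ∫ x in D, ((x 0 - centroid D 0) ^ 2 + (x 1 - centroid D 1) ^ 2)

/-! Rotation by `θ = 2π/N` with `N ≥ 3` has `sin θ ≠ 0`, so its only fixed vector is `0` and
the only symmetric matrices it commutes with are scalars. Invariance of `D` therefore makes the
first moments of `D` vanish and its second-moment matrix equal to `p • 1`. Consequently `T D` is
again centred at the origin, `I(D) = 2p`, `I(T D) = |det T| p ‖T‖²_HS` and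
`A(T D) = |det T| A(D)`, while `‖T⁻¹‖²_HS = ‖T‖²_HS / (det T)²` for `2 × 2` matrices. -/

open Matrix

section LinearImage

variable {ι : Type*} [Fintype ι] [DecidableEq ι]

theorem volume_image_mulVec (M : Matrix ι ι ℝ) (s : Set (ι → ℝ)) :
    volume ((M *ᵥ ·) '' s) = ENNReal.ofReal |M.det| * volume s := by
  rw [← LinearMap.det_toLin']
  exact Measure.addHaar_image_linearMap volume (Matrix.toLin' M) s

theorem setIntegral_image_mulVec {F : Type*} [NormedAddCommGroup F] [NormedSpace ℝ F]
    {M : Matrix ι ι ℝ} (hM : IsUnit M.det) {s : Set (ι → ℝ)} (hs : MeasurableSet s)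
    (g : (ι → ℝ) → F) :
    ∫ y in (M *ᵥ ·) '' s, g y = |M.det| • ∫ x in s, g (M *ᵥ x) := by
  let L := LinearMap.toContinuousLinearMap (Matrix.toLin' M)
  have hinj : Set.InjOn (M *ᵥ ·) s :=
    (Matrix.mulVec_injective_iff_isUnit.mpr ((Matrix.isUnit_iff_isUnit_det M).mpr hM)).injOn
  rw [integral_image_eq_integral_abs_det_fderiv_smul volume hs (f := (M *ᵥ ·))
    (fun x _ => L.hasFDerivWithinAt) hinj g, integral_smul]
  simp [L, ContinuousLinearMap.det, LinearMap.det_toLin']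

end LinearImage

theorem integrableOn_of_isBounded {X E : Type*} [MetricSpace X] [ProperSpace X]
    [MeasurableSpace X] [OpensMeasurableSpace X] {μ : Measure X} [IsFiniteMeasureOnCompacts μ]
    [NormedAddCommGroup E] {s : Set X} (hs : Bornology.IsBounded s) {g : X → E}
    (hg : Continuous g) : IntegrableOn g s μ :=
  (hg.continuousOn.integrableOn_compact hs.isCompact_closure).mono_set subset_closure

theorem mulVec_fin_two_apply (M : Matrix (Fin 2) (Fin 2) ℝ) (x : Fin 2 → ℝ) (i : Fin 2) :
    (M *ᵥ x) i = M i 0 * x 0 + M i 1 * x 1 := by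
  simp [mulVec, dotProduct, Fin.sum_univ_two]

section Moments

variable {D : Set (Fin 2 → ℝ)} (hbdd : Bornology.IsBounded D)
include hbdd

theorem setIntegral_linear_form (α β : ℝ) :
    ∫ x in D, (α * x 0 + β * x 1) = α * (∫ x in D, x 0) + β * ∫ x in D, x 1 := by
  rw [integral_add, integral_const_mul, integral_const_mul] <;>
    exact integrableOn_of_isBounded hbdd (by fun_prop)

theorem setIntegral_quadratic_form (α β γ : ℝ) :
    ∫ x in D, (α * x 0 ^ 2 + β * x 1 ^ 2 + γ * (x 0 * x 1))
      = α * (∫ x in D, x 0 ^ 2) + β * (∫ x in D, x 1 ^ 2) + γ * ∫ x in D, x 0 * x 1 := by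
  rw [integral_add, integral_add, integral_const_mul, integral_const_mul, integral_const_mul] <;>
    exact integrableOn_of_isBounded hbdd (by fun_prop)

theorem setIntegral_sq_add_sq :
    ∫ x in D, (x 0 ^ 2 + x 1 ^ 2) = (∫ x in D, x 0 ^ 2) + ∫ x in D, x 1 ^ 2 :=
  integral_add (integrableOn_of_isBounded hbdd (by fun_prop))
    (integrableOn_of_isBounded hbdd (by fun_prop))

end Moments

theorem det_rot (θ : ℝ) : (rot θ).det = 1 := by
  simp [rot, Matrix.det_fin_two_of, ← sq, Real.cos_sq_add_sin_sq]

theorem rot_mulVec_zero (θ : ℝ) (x : Fin 2 → ℝ) :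
    (rot θ *ᵥ x) 0 = Real.cos θ * x 0 + -Real.sin θ * x 1 := by
  simp [mulVec_fin_two_apply, rot]

theorem rot_mulVec_one (θ : ℝ) (x : Fin 2 → ℝ) :
    (rot θ *ᵥ x) 1 = Real.sin θ * x 0 + Real.cos θ * x 1 := by
  simp [mulVec_fin_two_apply, rot]

theorem setIntegral_comp_rot_mulVec {θ : ℝ} {D : Set (Fin 2 → ℝ)} (hD : MeasurableSet D)
    (hsym : (rot θ *ᵥ ·) '' D = D) (g : (Fin 2 → ℝ) → ℝ) :
    ∫ x in D, g (rot θ *ᵥ x) = ∫ x in D, g x := by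
  conv_rhs => rw [← hsym]
  rw [setIntegral_image_mulVec (by simp [det_rot]) hD, det_rot, abs_one, one_smul]

section RotationInvariant

variable {θ : ℝ} {D : Set (Fin 2 → ℝ)} (hD : MeasurableSet D) (hbdd : Bornology.IsBounded D)
  (hsym : (rot θ *ᵥ ·) '' D = D) (hθ : Real.sin θ ≠ 0)
include hD hbdd hsym hθ

theorem setIntegral_coord_eq_zero_of_rot_invariant (j : Fin 2) : ∫ x in D, x j = 0 := by
  set c := Real.cos θ
  set s := Real.sin θ
  set a := ∫ x in D, x 0
  set b := ∫ x in D, x 1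
  have ha : a = c * a + -s * b := calc
    a = ∫ x in D, (rot θ *ᵥ x) 0 := (setIntegral_comp_rot_mulVec hD hsym (· 0)).symm
    _ = c * a + -s * b := by
      simp only [rot_mulVec_zero]
      exact setIntegral_linear_form hbdd _ _
  have hb : b = s * a + c * b := calc
    b = ∫ x in D, (rot θ *ᵥ x) 1 := (setIntegral_comp_rot_mulVec hD hsym (· 1)).symm
    _ = s * a + c * b := by
      simp only [rot_mulVec_one]
      exact setIntegral_linear_form hbdd _ _
  have hpos : 0 < (1 - c) ^ 2 + s ^ 2 := by positivity
  fin_cases j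
  · have : ((1 - c) ^ 2 + s ^ 2) * a = 0 := by linear_combination (1 - c) * ha - s * hb
    exact (mul_eq_zero.mp this).resolve_left hpos.ne'
  · have : ((1 - c) ^ 2 + s ^ 2) * b = 0 := by linear_combination s * ha + (1 - c) * hb
    exact (mul_eq_zero.mp this).resolve_left hpos.ne'

theorem setIntegral_second_moments_of_rot_invariant :
    ∫ x in D, x 0 * x 1 = 0 ∧ ∫ x in D, x 1 ^ 2 = ∫ x in D, x 0 ^ 2 := by
  set c := Real.cos θ
  set s := Real.sin θ
  set p := ∫ x in D, x 0 ^ 2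
  set q := ∫ x in D, x 1 ^ 2
  set r := ∫ x in D, x 0 * x 1
  have hp : p = c ^ 2 * p + s ^ 2 * q + -(2 * c * s) * r := calc
    p = ∫ x in D, (rot θ *ᵥ x) 0 ^ 2 := (setIntegral_comp_rot_mulVec hD hsym (· 0 ^ 2)).symm
    _ = ∫ x in D, (c ^ 2 * x 0 ^ 2 + s ^ 2 * x 1 ^ 2 + -(2 * c * s) * (x 0 * x 1)) := by
      congr 1 with x
      rw [rot_mulVec_zero]
      ring
    _ = _ := setIntegral_quadratic_form hbdd _ _ _
  have hr : r = c * s * p + -(c * s) * q + (c ^ 2 - s ^ 2) * r := calc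
    r = ∫ x in D, (rot θ *ᵥ x) 0 * (rot θ *ᵥ x) 1 :=
      (setIntegral_comp_rot_mulVec hD hsym (fun x => x 0 * x 1)).symm
    _ = ∫ x in D, (c * s * x 0 ^ 2 + -(c * s) * x 1 ^ 2 + (c ^ 2 - s ^ 2) * (x 0 * x 1)) := by
      congr 1 with x
      rw [rot_mulVec_zero, rot_mulVec_one]
      ring
    _ = _ := setIntegral_quadratic_form hbdd _ _ _
  have pyth : s ^ 2 + c ^ 2 = 1 := Real.sin_sq_add_cos_sq θ
  have hr0 : r = 0 := by
    have : (2 * s) * r = 0 := by linear_combination c * hp + s * hr + (c * p - s * r) * pyth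
    exact (mul_eq_zero.mp this).resolve_left (by positivity)
  have hqp : s ^ 2 * (q - p) = 0 := by linear_combination -hp - p * pyth + 2 * c * s * hr0
  exact ⟨hr0, by linear_combination (mul_eq_zero.mp hqp).resolve_left (by positivity)⟩

end RotationInvariant

theorem sin_two_pi_div_ne_zero {N : ℕ} (hN : 3 ≤ N) : Real.sin (2 * π / N) ≠ 0 := by
  have hN' : (3 : ℝ) ≤ N := by exact_mod_cast hN
  refine (Real.sin_pos_of_pos_of_lt_pi (by positivity) ?_).ne'
  rw [div_lt_iff₀ (by positivity)]
  nlinarith [Real.pi_pos]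

theorem area_pos {D : Set (Fin 2 → ℝ)} (hbdd : Bornology.IsBounded D) (hpos : 0 < volume D) :
    0 < area D :=
  ENNReal.toReal_pos hpos.ne' hbdd.measure_lt_top.ne

theorem area_image_mulVec (T : Matrix (Fin 2) (Fin 2) ℝ) (D : Set (Fin 2 → ℝ)) :
    area ((T *ᵥ ·) '' D) = |T.det| * area D := by
  rw [area, volume_image_mulVec, ENNReal.toReal_mul, ENNReal.toReal_ofReal (abs_nonneg _), area]

theorem inertia_pos {D : Set (Fin 2 → ℝ)} (hbdd : Bornology.IsBounded D) (hpos : 0 < volume D) :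
    0 < inertia D := by
  set c : Fin 2 → ℝ := centroid D
  set f : (Fin 2 → ℝ) → ℝ := fun x => (x 0 - c 0) ^ 2 + (x 1 - c 1) ^ 2
  have hsupp : D \ {c} ⊆ Function.support f ∩ D := by
    rintro x ⟨hxD, hxc⟩
    refine ⟨fun hfx => hxc ?_, hxD⟩
    obtain ⟨h0, h1⟩ := (add_eq_zero_iff_of_nonneg (sq_nonneg _) (sq_nonneg _)).mp hfx
    ext i
    fin_cases i
    · exact sub_eq_zero.mp (pow_eq_zero_iff two_ne_zero |>.mp h0)
    · exact sub_eq_zero.mp (pow_eq_zero_iff two_ne_zero |>.mp h1)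
  refine (setIntegral_pos_iff_support_of_nonneg_ae (f := f)
    (Filter.Eventually.of_forall fun x => by positivity)
    (integrableOn_of_isBounded hbdd (by fun_prop))).mpr ?_
  calc 0 < volume D := hpos
    _ = volume (D \ {c}) := (measure_sdiff_null (measure_singleton c)).symm
    _ ≤ _ := measure_mono hsupp

theorem inertia_eq_of_setIntegral_coord_eq_zero {D : Set (Fin 2 → ℝ)}
    (h : ∀ j, ∫ x in D, x j = 0) : inertia D = ∫ x in D, (x 0 ^ 2 + x 1 ^ 2) := by
  simp only [inertia, centroid, h, zero_div, sub_zero]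

theorem sum_sq_inv_fin_two (T : Matrix (Fin 2) (Fin 2) ℝ) :
    ∑ i, ∑ j, (T⁻¹ i j) ^ 2 = (∑ i, ∑ j, (T i j) ^ 2) / T.det ^ 2 := by
  rw [Matrix.inv_def, Matrix.adjugate_fin_two, Ring.inverse_eq_inv']
  simp [Fin.sum_univ_two]
  ring

section LinearImageMoments

variable {T : Matrix (Fin 2) (Fin 2) ℝ} (hT : IsUnit T.det) {D : Set (Fin 2 → ℝ)}
  (hD : MeasurableSet D) (hbdd : Bornology.IsBounded D)
include hT hD hbdd

theorem setIntegral_image_coord_eq_zero (h : ∀ j, ∫ x in D, x j = 0) (j : Fin 2) :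
    ∫ y in (T *ᵥ ·) '' D, y j = 0 := by
  rw [setIntegral_image_mulVec hT hD (· j)]
  simp only [mulVec_fin_two_apply, setIntegral_linear_form hbdd, h, mul_zero, add_zero, smul_zero]

theorem setIntegral_image_sq_add_sq (h01 : ∫ x in D, x 0 * x 1 = 0)
    (h11 : ∫ x in D, x 1 ^ 2 = ∫ x in D, x 0 ^ 2) :
    ∫ y in (T *ᵥ ·) '' D, (y 0 ^ 2 + y 1 ^ 2)
      = |T.det| * ((∑ i, ∑ j, T i j ^ 2) * ∫ x in D, x 0 ^ 2) := by
  have hTx (x : Fin 2 → ℝ) : (T *ᵥ x) 0 ^ 2 + (T *ᵥ x) 1 ^ 2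
      = (T 0 0 ^ 2 + T 1 0 ^ 2) * x 0 ^ 2 + (T 0 1 ^ 2 + T 1 1 ^ 2) * x 1 ^ 2
        + 2 * (T 0 0 * T 0 1 + T 1 0 * T 1 1) * (x 0 * x 1) := by
    simp only [mulVec_fin_two_apply]
    ring
  rw [setIntegral_image_mulVec hT hD (fun y => y 0 ^ 2 + y 1 ^ 2), smul_eq_mul]
  simp only [hTx, setIntegral_quadratic_form hbdd, h01, h11, Fin.sum_univ_two]
  ring

end LinearImageMoments

/-- For a bounded measurable `D ⊂ ℝ²` of positive area with rotational symmetry of order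
`N ≥ 3`, and an invertible 2×2 matrix `T`:
`(1/2)‖T⁻¹‖²_HS = [I/A³](T D) / [I/A³](D)`. -/
theorem hs_norm_as_inertia_ratio (N : ℕ) (hN : 3 ≤ N) (D : Set (Fin 2 → ℝ))
    (hmeas : MeasurableSet D) (hbdd : Bornology.IsBounded D) (hpos : 0 < volume D)
    (hsym : (fun x => (rot (2 * Real.pi / (N : ℝ))).mulVec x) '' D = D)
    (T : Matrix (Fin 2) (Fin 2) ℝ) (hT : IsUnit T.det) :
    (1 / 2) * (∑ i : Fin 2, ∑ j : Fin 2, (T⁻¹ i j) ^ 2)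
      = (inertia ((fun x => T.mulVec x) '' D) / area ((fun x => T.mulVec x) '' D) ^ 3)
          / (inertia D / area D ^ 3) := by
  have hθ := sin_two_pi_div_ne_zero hN
  have hfirst := setIntegral_coord_eq_zero_of_rot_invariant hmeas hbdd hsym hθ
  obtain ⟨h01, h11⟩ := setIntegral_second_moments_of_rot_invariant hmeas hbdd hsym hθ
  have hID : inertia D = 2 * ∫ x in D, x 0 ^ 2 := by
    rw [inertia_eq_of_setIntegral_coord_eq_zero hfirst, setIntegral_sq_add_sq hbdd, h11]
    ring
  have hIE : inertia ((T *ᵥ ·) '' D)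
      = |T.det| * ((∑ i, ∑ j, T i j ^ 2) * ∫ x in D, x 0 ^ 2) := by
    rw [inertia_eq_of_setIntegral_coord_eq_zero
      (setIntegral_image_coord_eq_zero hT hmeas hbdd hfirst),
      setIntegral_image_sq_add_sq hT hmeas hbdd h01 h11]
  have hp : 0 < ∫ x in D, x 0 ^ 2 := by linarith [inertia_pos hbdd hpos]
  have hA : area D ≠ 0 := (area_pos hbdd hpos).ne'
  have hd : |T.det| ≠ 0 := abs_ne_zero.mpr hT.ne_zero
  rw [sum_sq_inv_fin_two, hIE, area_image_mulVec, hID, ← sq_abs T.det]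
  field_simp
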